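/- arXiv:1312.4053 — 6 statements merged into one kernel-verified Lean document; each statement's English description precedes it below -/
import Mathlib

section
/- Let G be a finite abelian group, H ≤ G a subgroup, Γ = G/H, and J_H ⊆ Z[G] the kernel of the natural projection Z[G] → Z[Γ]. Then for every r ≥ 0, the map sending γ ⊗ α to α·γ̄ (where γ̄ ∈ Z[G] is any lift of γ ∈ Γ) gives a well-defined isomorphism Z[Γ] ⊗_Z (A_H^r/A_H^{r+1}) ≅ J_H^r/J_H^{r+1}, where A_H is the augmentation ideal of Z[H]. -/
/-!
Choosing a representative `s γ` of every coset `γ ∈ Γ` makes `ℤ[G]` a free `ℤ[H]`-module with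
basis `(s γ)_γ`. Since `J_H^n = A_H^n · ℤ[G]`, an element lies in `J_H^n` exactly when all of its
coordinates lie in `A_H^n`, so taking coordinates modulo `A_H^{r+1}` identifies `J_H^r/J_H^{r+1}`
with `Γ →₀ A_H^r/A_H^{r+1} ≅ ℤ[Γ] ⊗ A_H^r/A_H^{r+1}`. The choice of lift is irrelevant: another
lift is `h · s γ` with `h ∈ H`, and `α h - α = α (h - 1) ∈ A_H^{r+1}`.
-/

/-- The augmentation ideal of the integral group ring `ℤ[H]`. -/
noncomputable def augIdeal (H : Type*) [CommGroup H] : Ideal (MonoidAlgebra ℤ H) :=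
  RingHom.ker ((MonoidAlgebra.lift ℤ ℤ H (1 : H →* ℤ)) : MonoidAlgebra ℤ H →ₐ[ℤ] ℤ).toRingHom

/-- `J_H`: the kernel of the natural projection `ℤ[G] → ℤ[G/H]`. -/
noncomputable def JIdeal {G : Type*} [CommGroup G] (H : Subgroup G) [H.Normal] :
    Ideal (MonoidAlgebra ℤ G) :=
  RingHom.ker (MonoidAlgebra.mapDomainRingHom ℤ (QuotientGroup.mk' H))

namespace Module.Basis

section Ideal

variable {R S ι : Type*} [CommSemiring R] [CommSemiring S] [Algebra R S] (b : Basis ι R S)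

theorem mem_map_algebraMap_iff (I : Ideal R) (x : S) :
    x ∈ I.map (algebraMap R S) ↔ ∀ i, b.repr x i ∈ I := by
  rw [← Submodule.restrictScalars_mem R, ← Ideal.smul_top_eq_map, ← b.span_eq,
    Submodule.mem_ideal_smul_span_iff_exists_sum]
  constructor
  · rintro ⟨a, ha, rfl⟩
    simpa [← Finsupp.linearCombination_apply] using ha
  · exact fun h => ⟨b.repr x, h, b.linearCombination_repr x⟩

end Ideal

section Subquotient

-- Only the additive structure of `N` and `N'` matters, so they may be submodules over any ring `A`.
variable {R A M ι : Type*} [Ring R] [Ring A] [AddCommGroup M] [Module R M] [Module A M]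
  (b : Basis ι R M) {P Q : Ideal R} {N N' : Submodule A M}
  (hN : ∀ x, x ∈ N ↔ ∀ i, b.repr x i ∈ P) (hN' : ∀ x, x ∈ N' ↔ ∀ i, b.repr x i ∈ Q)

noncomputable def reprMod :
    N →+ (ι →₀ (P ⧸ Submodule.comap P.subtype Q)) where
  toFun x := Finsupp.onFinset (b.repr x).support
    (fun i => Submodule.Quotient.mk ⟨b.repr x i, (hN x).1 x.2 i⟩)
    (fun i hi => Finsupp.mem_support_iff.2 fun h0 => hi <|
      (Submodule.Quotient.mk_eq_zero _).2 (by simp [h0]))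
  map_zero' := by ext; simp
  map_add' x y := by
    ext i
    simp only [Finsupp.onFinset_apply, Finsupp.add_apply, ← Submodule.Quotient.mk_add]
    congr 1
    ext
    simp

theorem reprMod_apply (x : N) (i : ι) :
    b.reprMod (Q := Q) hN x i = Submodule.Quotient.mk ⟨b.repr x i, (hN x).1 x.2 i⟩ :=
  rfl

include hN' in
theorem reprMod_eq_zero_iff (x : N) : b.reprMod (Q := Q) hN x = 0 ↔ (x : M) ∈ N' := by
  simp [Finsupp.ext_iff, reprMod_apply, hN', Submodule.Quotient.mk_eq_zero]

theorem reprMod_surjective : Function.Surjective (b.reprMod (Q := Q) hN) := by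
  classical
  intro q
  induction q using Finsupp.induction_linear with
  | zero => exact ⟨0, map_zero _⟩
  | add q q' hq hq' =>
    obtain ⟨x, rfl⟩ := hq
    obtain ⟨x', rfl⟩ := hq'
    exact ⟨x + x', map_add _ _ _⟩
  | single i m =>
    obtain ⟨p, rfl⟩ := Submodule.Quotient.mk_surjective _ m
    have hrepr : b.repr ((p : R) • b i) = Finsupp.single i (p : R) := by
      rw [map_smul, b.repr_self, Finsupp.smul_single_one]
    have hp : (p : R) • b i ∈ N := (hN _).2 fun j => by
      rw [hrepr, Finsupp.single_apply]
      split_ifs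
      exacts [p.2, P.zero_mem]
    refine ⟨⟨_, hp⟩, Finsupp.ext fun j => ?_⟩
    rw [reprMod_apply]
    by_cases hj : i = j
    · subst hj
      simp [hrepr]
    · simp [hrepr, hj]

noncomputable def subquotientEquivFinsupp :
    (N ⧸ N'.comap N.subtype) ≃+ (ι →₀ (P ⧸ Submodule.comap P.subtype Q)) :=
  AddEquiv.ofBijective
    (QuotientAddGroup.lift (N'.comap N.subtype).toAddSubgroup (b.reprMod hN)
      fun x hx => (b.reprMod_eq_zero_iff hN hN' x).2 hx) <| by
    refine ⟨(injective_iff_map_eq_zero _).2 fun x hx => ?_, fun q => ?_⟩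
    · obtain ⟨x, rfl⟩ := Submodule.Quotient.mk_surjective _ x
      exact (Submodule.Quotient.mk_eq_zero _).2 ((b.reprMod_eq_zero_iff hN hN' x).1 hx)
    · obtain ⟨x, rfl⟩ := b.reprMod_surjective hN q
      exact ⟨Submodule.Quotient.mk x, rfl⟩

theorem subquotientEquivFinsupp_mk (x : N) :
    b.subquotientEquivFinsupp hN hN' (Submodule.Quotient.mk x) = b.reprMod hN x :=
  rfl

end Subquotient

end Module.Basis

namespace Subgroup

variable {G : Type*} [Group G] (H : Subgroup G)

noncomputable def equivQuotientProd : G ≃ (G ⧸ H) × H where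
  toFun g := (g, ⟨(Quotient.out (g : G ⧸ H))⁻¹ * g, QuotientGroup.eq.1 (QuotientGroup.out_eq' _)⟩)
  invFun p := Quotient.out p.1 * p.2
  left_inv g := mul_inv_cancel_left _ _
  right_inv := fun ⟨γ, h⟩ => by
    have hγ : ((Quotient.out γ * h : G) : G ⧸ H) = γ := by
      rw [QuotientGroup.mk_mul_of_mem _ h.2, QuotientGroup.out_eq']
    ext <;> simp [hγ]

theorem coe_equivQuotientProd_snd (g : G) :
    ((H.equivQuotientProd g).2 : G) = (Quotient.out (g : G ⧸ H))⁻¹ * g :=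
  rfl

end Subgroup

namespace MonoidAlgebra

open scoped MonoidAlgebra TensorProduct

section Tensor

variable (k G M : Type*) [CommSemiring k] [AddCommMonoid M] [Module k M] [DecidableEq G]

noncomputable def tensorEquivFinsupp : k[G] ⊗[k] M ≃ₗ[k] (G →₀ M) :=
  (TensorProduct.congr (coeffLinearEquiv k) (.refl k M)).trans
    (TensorProduct.finsuppScalarLeft k M G)

variable {k G M} [Monoid G]

theorem tensorEquivFinsupp_of_tmul (g : G) (m : M) :
    tensorEquivFinsupp k G M (of k G g ⊗ₜ m) = Finsupp.single g m := by
  simp [tensorEquivFinsupp, TensorProduct.finsuppScalarLeft_apply_tmul]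

end Tensor

variable {k G : Type*} [CommSemiring k] [CommGroup G] (H : Subgroup G)

noncomputable instance subgroupAlgebra : Algebra k[H] k[G] :=
  (mapDomainRingHom k H.subtype).toAlgebra

theorem subgroup_smul_def (a : k[H]) (x : k[G]) : a • x = mapDomainRingHom k H.subtype a * x :=
  rfl

noncomputable def cosetAddEquiv : k[G] ≃+ (G ⧸ H →₀ k[H]) :=
  (mapDomainAddEquiv k H.equivQuotientProd).trans (curryAddEquiv.trans coeffAddEquiv)

theorem cosetAddEquiv_single (g : G) (c : k) :
    cosetAddEquiv H (single g c) =
      Finsupp.single (g : G ⧸ H) (single (H.equivQuotientProd g).2 c) := by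
  rw [cosetAddEquiv, AddEquiv.trans_apply, mapDomainAddEquiv_single,
    ← Prod.mk.eta (p := H.equivQuotientProd g), AddEquiv.trans_apply, curryAddEquiv_single]
  rfl

theorem cosetAddEquiv_smul (a : k[H]) (x : k[G]) :
    cosetAddEquiv H (a • x) = a • cosetAddEquiv H x := by
  induction a using MonoidAlgebra.induction_linear with
  | zero => simp
  | add a a' ha ha' => rw [add_smul, map_add, ha, ha', add_smul]
  | single h c =>
    induction x using MonoidAlgebra.induction_linear with
    | zero => simp
    | add x x' hx hx' => rw [smul_add, map_add, hx, hx', map_add, smul_add]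
    | single g c' =>
      have hg : ((h * g : G) : G ⧸ H) = g := by
        rw [mul_comm, QuotientGroup.mk_mul_of_mem _ h.2]
      have hsnd : (H.equivQuotientProd (h * g)).2 = h * (H.equivQuotientProd g).2 :=
        Subtype.ext <| by
          simp only [Subgroup.coe_equivQuotientProd_snd, hg, Subgroup.coe_mul, mul_left_comm]
      rw [subgroup_smul_def, mapDomainRingHom_apply, mapDomain_single, single_mul_single,
        Subgroup.coe_subtype, cosetAddEquiv_single, cosetAddEquiv_single, Finsupp.smul_single,
        smul_eq_mul, single_mul_single, hsnd, hg]

noncomputable def cosetBasis : Module.Basis (G ⧸ H) k[H] k[G] :=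
  .ofRepr ((cosetAddEquiv H).toLinearEquiv (cosetAddEquiv_smul H))

theorem cosetBasis_repr_single (g : G) (c : k) :
    (cosetBasis H).repr (single g c) =
      Finsupp.single (g : G ⧸ H) (single (H.equivQuotientProd g).2 c) :=
  cosetAddEquiv_single H g c

theorem cosetBasis_repr_mul_of (a : k[H]) (g : G) :
    (cosetBasis H).repr (mapDomainRingHom k H.subtype a * of k G g) =
      Finsupp.single (g : G ⧸ H) (a * of k H (H.equivQuotientProd g).2) := by
  rw [← subgroup_smul_def, map_smul, of_apply, cosetBasis_repr_single, Finsupp.smul_single,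
    smul_eq_mul, of_apply]

theorem coeff_mapDomainRingHom_mk [H.Normal] (x : k[G]) (γ : G ⧸ H) :
    (mapDomainRingHom k (QuotientGroup.mk' H) x).coeff γ =
      lift k k H 1 ((cosetBasis H).repr x γ) := by
  induction x using MonoidAlgebra.induction_linear with
  | zero => simp
  | add x x' hx hx' =>
    rw [map_add, coeff_add, Finsupp.add_apply, hx, hx', map_add, Finsupp.add_apply, map_add]
  | single g c =>
    rw [mapDomainRingHom_apply, mapDomain_single, cosetBasis_repr_single]
    by_cases hγ : (g : G ⧸ H) = γ
    · subst hγ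
      simp [lift_single]
    · simp [hγ]

end MonoidAlgebra

open MonoidAlgebra

theorem JIdeal_eq_map_augIdeal {G : Type*} [CommGroup G] (H : Subgroup G) [H.Normal] :
    JIdeal H = (augIdeal H).map (algebraMap (MonoidAlgebra ℤ H) (MonoidAlgebra ℤ G)) := by
  ext x
  rw [(cosetBasis H).mem_map_algebraMap_iff, JIdeal, RingHom.mem_ker, MonoidAlgebra.ext_iff]
  simp only [Finsupp.ext_iff, coeff_mapDomainRingHom_mk]
  simp [augIdeal]

theorem mem_JIdeal_pow_iff {G : Type*} [CommGroup G] (H : Subgroup G) [H.Normal] (n : ℕ)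
    (x : MonoidAlgebra ℤ G) :
    x ∈ JIdeal H ^ n ↔ ∀ γ, (cosetBasis H).repr x γ ∈ augIdeal H ^ n := by
  rw [JIdeal_eq_map_augIdeal, ← Ideal.map_pow, (cosetBasis H).mem_map_algebraMap_iff]

theorem mul_of_sub_self_mem_augIdeal_pow_succ {H : Type*} [CommGroup H] {r : ℕ}
    {α : MonoidAlgebra ℤ H} (hα : α ∈ augIdeal H ^ r) (h : H) :
    α * of ℤ H h - α ∈ augIdeal H ^ (r + 1) := by
  rw [← mul_sub_one, pow_succ]
  exact Ideal.mul_mem_mul hα (by simp [augIdeal])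

theorem tensor_aug_quotient_iso_general {G : Type*} [CommGroup G]
    (H : Subgroup G) [H.Normal] (r : ℕ) :
    ∃ e : (TensorProduct ℤ (MonoidAlgebra ℤ (G ⧸ H))
        (↥(augIdeal ↥H ^ r) ⧸
          Submodule.comap (augIdeal ↥H ^ r : Ideal (MonoidAlgebra ℤ ↥H)).subtype
            (augIdeal ↥H ^ (r + 1) : Ideal (MonoidAlgebra ℤ ↥H)))) ≃+
      (↥(JIdeal H ^ r) ⧸
        Submodule.comap (JIdeal H ^ r : Ideal (MonoidAlgebra ℤ G)).subtype
          (JIdeal H ^ (r + 1) : Ideal (MonoidAlgebra ℤ G))),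
      ∀ (g : G) (α : MonoidAlgebra ℤ ↥H) (hα : α ∈ augIdeal ↥H ^ r)
        (h2 : MonoidAlgebra.mapDomainRingHom ℤ H.subtype α * MonoidAlgebra.of ℤ G g ∈
          JIdeal H ^ r),
        e ((MonoidAlgebra.of ℤ (G ⧸ H) (QuotientGroup.mk g)) ⊗ₜ[ℤ]
            Submodule.Quotient.mk ⟨α, hα⟩) =
          Submodule.Quotient.mk
            ⟨MonoidAlgebra.mapDomainRingHom ℤ H.subtype α * MonoidAlgebra.of ℤ G g, h2⟩ := by
  classical
  let Φ := (cosetBasis (k := ℤ) H).subquotientEquivFinsupp (mem_JIdeal_pow_iff H r)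
    (mem_JIdeal_pow_iff H (r + 1))
  refine ⟨(tensorEquivFinsupp ℤ (G ⧸ H) _).toAddEquiv.trans Φ.symm, fun g α hα h2 => ?_⟩
  rw [AddEquiv.trans_apply, AddEquiv.symm_apply_eq, LinearEquiv.coe_toAddEquiv,
    LinearEquiv.coe_addEquiv_apply, tensorEquivFinsupp_of_tmul,
    Module.Basis.subquotientEquivFinsupp_mk]
  ext γ
  rw [Module.Basis.reprMod_apply]
  simp only [cosetBasis_repr_mul_of, Finsupp.single_apply]
  split_ifs
  · refine ((Submodule.Quotient.eq _).2 ?_).symm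
    exact mul_of_sub_self_mem_augIdeal_pow_succ hα _
  · exact (Submodule.Quotient.mk_zero _).symm

/-- For a finite abelian group `G`, a subgroup `H` with quotient
`Γ = G/H`, and every `r ≥ 0`, the map `γ ⊗ α ↦ α·γ̄` (for `γ̄` a lift of `γ`)
is a well-defined isomorphism `ℤ[Γ] ⊗_ℤ (A_H^r/A_H^{r+1}) ≅ J_H^r/J_H^{r+1}`. -/
theorem tensor_aug_quotient_iso {G : Type*} [CommGroup G] [Finite G]
    (H : Subgroup G) [H.Normal] (r : ℕ) :
    ∃ e : (TensorProduct ℤ (MonoidAlgebra ℤ (G ⧸ H))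
        (↥(augIdeal ↥H ^ r) ⧸
          Submodule.comap (augIdeal ↥H ^ r : Ideal (MonoidAlgebra ℤ ↥H)).subtype
            (augIdeal ↥H ^ (r + 1) : Ideal (MonoidAlgebra ℤ ↥H)))) ≃+
      (↥(JIdeal H ^ r) ⧸
        Submodule.comap (JIdeal H ^ r : Ideal (MonoidAlgebra ℤ G)).subtype
          (JIdeal H ^ (r + 1) : Ideal (MonoidAlgebra ℤ G))),
      ∀ (g : G) (α : MonoidAlgebra ℤ ↥H) (hα : α ∈ augIdeal ↥H ^ r)
        (h2 : MonoidAlgebra.mapDomainRingHom ℤ H.subtype α * MonoidAlgebra.of ℤ G g ∈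
          JIdeal H ^ r),
        e ((MonoidAlgebra.of ℤ (G ⧸ H) (QuotientGroup.mk g)) ⊗ₜ[ℤ]
            Submodule.Quotient.mk ⟨α, hα⟩) =
          Submodule.Quotient.mk
            ⟨MonoidAlgebra.mapDomainRingHom ℤ H.subtype α * MonoidAlgebra.of ℤ G g, h2⟩ :=
  tensor_aug_quotient_iso_general H r
end

section
/- Let G be a finite abelian group, H ≤ G, J_H ⊆ Z[G] the kernel of Z[G] → Z[G/H], A_H ⊆ Z[H] the augmentation ideal, and ψ : Z[G] → Z[G] ⊗_Z Z[H] given by ψ(ρ) = Σ_{h ∈ H} hρ ⊗ h^{-1}. Then for every t ≥ 0, ψ(J_H^t) ⊆ Z[G] ⊗_Z A_H^t. -/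
/-- The map `ψ : ℤ[G] → ℤ[G] ⊗_ℤ ℤ[H]`, `ψ(ρ) = Σ_{h ∈ H} hρ ⊗ h⁻¹`. -/
noncomputable def psiMap {G : Type*} [CommGroup G] (H : Subgroup G) [Fintype ↥H]
    (ρ : MonoidAlgebra ℤ G) :
    TensorProduct ℤ (MonoidAlgebra ℤ G) (MonoidAlgebra ℤ ↥H) :=
  ∑ h : ↥H, (MonoidAlgebra.of ℤ G (h : G) * ρ) ⊗ₜ[ℤ] MonoidAlgebra.of ℤ ↥H h⁻¹

/-!
Since `ψ(c ρ) = (c ⊗ 1) ψ(ρ)` and, reindexing the sum, `ψ(h ρ) = (1 ⊗ h) ψ(ρ)` for `h ∈ H`, one gets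
`ψ(ρ (h - 1)) = (1 ⊗ (h - 1)) ψ(ρ)`. The ideal `J_H` is generated by the elements `h - 1`, so
`ψ(J_H^t)` lies in the `t`-th power of the ideal of `ℤ[G] ⊗ ℤ[H]` generated by `1 ⊗ A_H`, and that
power is the image of `ℤ[G] ⊗ A_H^t`.
-/

open MonoidAlgebra Algebra.TensorProduct TensorProduct Pointwise

theorem MonoidAlgebra.ker_mapDomainRingHom_mk'_le_span {R G : Type*} [CommRing R] [CommGroup G]
    (N : Subgroup G) :
    RingHom.ker (mapDomainRingHom R (QuotientGroup.mk' N)) ≤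
      Ideal.span (Set.range fun h : N => of R G h - 1) := by
  set I := Ideal.span (Set.range fun h : N => of R G h - 1)
  have hN : N ≤ ((Ideal.Quotient.mk I).toMonoidHom.comp (of R G)).ker := fun h hh => by
    have : of R G h - 1 ∈ I := Ideal.subset_span ⟨⟨h, hh⟩, rfl⟩
    simpa [Ideal.Quotient.mk_eq_one_iff_sub_mem]
  let τ := lift R (R[G] ⧸ I) (G ⧸ N) (QuotientGroup.lift N _ hN)
  have hτ : τ.comp (mapDomainAlgHom R R (QuotientGroup.mk' N)) = Ideal.Quotient.mkₐ R I := by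
    ext; simp [τ]
  intro ρ hρ
  rw [← Ideal.Quotient.eq_zero_iff_mem, ← Ideal.Quotient.mkₐ_eq_mk R, ← hτ, AlgHom.comp_apply]
  exact (congrArg τ hρ).trans (map_zero τ)

theorem of_sub_one_mem_augIdeal {H : Type*} [CommGroup H] (h : H) : of ℤ H h - 1 ∈ augIdeal H := by
  simp [augIdeal]

section psi

variable {G : Type*} [CommGroup G] (H : Subgroup G) [Fintype H]

theorem psiMap_mul (c x : ℤ[G]) : psiMap H (c * x) = includeLeftRingHom c * psiMap H x := by
  simp [psiMap, Finset.mul_sum, tmul_mul_tmul, mul_left_comm]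

theorem psiMap_of_mul (h : H) (x : ℤ[G]) :
    psiMap H (of ℤ G h * x) = includeRight (of ℤ H h) * psiMap H x := by
  simp only [psiMap, Finset.mul_sum, includeRight_apply, tmul_mul_tmul, one_mul]
  refine Fintype.sum_equiv (Equiv.mulRight h) _ _ fun m => ?_
  rw [Equiv.coe_mulRight, Subgroup.coe_mul, map_mul, mul_assoc, ← map_mul (of ℤ H), mul_inv_rev,
    mul_inv_cancel_left]

theorem psiMap_add (x y : ℤ[G]) : psiMap H (x + y) = psiMap H x + psiMap H y := by
  simp [psiMap, mul_add, add_tmul, Finset.sum_add_distrib]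

theorem psiMap_sub (x y : ℤ[G]) : psiMap H (x - y) = psiMap H x - psiMap H y := by
  simp [psiMap, mul_sub, sub_tmul, Finset.sum_sub_distrib]

theorem psiMap_mul_of_sub_one (x : ℤ[G]) (h : H) :
    psiMap H (x * (of ℤ G h - 1)) = includeRight (of ℤ H h - 1) * psiMap H x := by
  rw [mul_sub, mul_one, mul_comm, psiMap_sub, psiMap_of_mul, map_sub, map_one, sub_mul, one_mul]

def psiPreimage (I : Ideal (ℤ[G] ⊗[ℤ] ℤ[H])) : Ideal ℤ[G] where
  carrier := {x | psiMap H x ∈ I}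
  zero_mem' := by simp [psiMap]
  add_mem' {x y} hx hy := by
    show psiMap H (x + y) ∈ I
    exact psiMap_add H x y ▸ I.add_mem hx hy
  smul_mem' c x hx := by
    show psiMap H (c * x) ∈ I
    exact psiMap_mul H c x ▸ I.mul_mem_left _ hx

theorem psiMap_mem_pow_of_mem_pow (t : ℕ) (x : ℤ[G])
    (hx : x ∈ (Set.range fun h : H => of ℤ G h - 1) ^ t) :
    psiMap H x ∈ ((augIdeal H).map (includeRight : ℤ[H] →ₐ[ℤ] ℤ[G] ⊗[ℤ] ℤ[H])) ^ t := by
  induction t generalizing x with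
  | zero => simp
  | succ t ih =>
    rw [pow_succ] at hx
    obtain ⟨y, hy, _, ⟨h, rfl⟩, rfl⟩ := hx
    rw [psiMap_mul_of_sub_one, mul_comm, Submodule.pow_succ]
    exact Submodule.mul_mem_mul (ih y hy) (Ideal.mem_map_of_mem _ (of_sub_one_mem_augIdeal h))

end psi

/-- For every `t ≥ 0`, `ψ(J_H^t) ⊆ ℤ[G] ⊗_ℤ A_H^t`: the image
under `ψ` of the `t`-th power of `J_H` lies in the image of
`ℤ[G] ⊗ A_H^t → ℤ[G] ⊗ ℤ[H]`. -/
theorem psi_maps_J_pow_into_tensor_A_pow {G : Type*} [CommGroup G] (H : Subgroup G)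
    [H.Normal] [Fintype ↥H] (t : ℕ) (ρ : MonoidAlgebra ℤ G) (hρ : ρ ∈ JIdeal H ^ t) :
    psiMap H ρ ∈
      LinearMap.range (LinearMap.lTensor (MonoidAlgebra ℤ G)
        (Submodule.subtype
          (Submodule.restrictScalars ℤ (augIdeal ↥H ^ t : Ideal (MonoidAlgebra ℤ ↥H))))) := by
  rw [← Ideal.map_includeRight_eq, Ideal.map_pow, Submodule.restrictScalars_mem]
  have hJ : JIdeal H ^ t ≤ Ideal.span ((Set.range fun h : H => of ℤ G h - 1) ^ t) := by
    rw [Ideal.span, ← Submodule.span_pow]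
    exact Ideal.pow_right_mono (ker_mapDomainRingHom_mk'_le_span H) t
  exact (Ideal.span_le (I := psiPreimage H _)).2 (psiMap_mem_pow_of_mem_pow H t) (hJ hρ)
end

section
/- Let G be a finite abelian group, H ≤ G, Γ = G/H, t ≥ 0. With ψ(ρ) = Σ_{h ∈ H} hρ ⊗ h^{-1}, the induced map J_H^t/J_H^{t+1} → Z[G] ⊗_Z (A_H^t/A_H^{t+1}) equals the composition of the isomorphism J_H^t/J_H^{t+1} ≅ Z[Γ] ⊗_Z (A_H^t/A_H^{t+1}) with the map ι ⊗ 1 where ι : Z[Γ] → Z[G] sends a coset to the sum of its elements. In particular the induced map ψ on J_H^t/J_H^{t+1} is injective. -/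
open scoped Classical in
/-- The sum in `ℤ[G]` of the elements of the coset `c ∈ G/H`. -/
noncomputable def cosetSum {G : Type*} [CommGroup G] [Fintype G] (H : Subgroup G)
    (c : G ⧸ H) : MonoidAlgebra ℤ G :=
  ∑ g ∈ Finset.univ.filter (fun g : G => (QuotientGroup.mk g : G ⧸ H) = c),
    MonoidAlgebra.of ℤ G g

section

variable {G : Type*} [CommGroup G] (H : Subgroup G) [H.Normal] (t : ℕ)

/-- `A_H^t`, viewed as a `ℤ`-submodule of `ℤ[H]`. -/
noncomputable def At : Submodule ℤ (MonoidAlgebra ℤ ↥H) :=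
  Submodule.restrictScalars ℤ (augIdeal ↥H ^ t : Ideal (MonoidAlgebra ℤ ↥H))

/-- `J_H^t`, viewed as a `ℤ`-submodule of `ℤ[G]`. -/
noncomputable def Jt : Submodule ℤ (MonoidAlgebra ℤ G) :=
  Submodule.restrictScalars ℤ (JIdeal H ^ t : Ideal (MonoidAlgebra ℤ G))

/-- The quotient `A_H^t / A_H^{t+1}`. -/
noncomputable abbrev QA :=
  ↥(At H t) ⧸ Submodule.comap (At H t).subtype (At H (t + 1))

/-- The quotient `J_H^t / J_H^{t+1}`. -/
noncomputable abbrev QJ :=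
  ↥(Jt H t) ⧸ Submodule.comap (Jt H t).subtype (Jt H (t + 1))

/-- The natural map `A_H^t/A_H^{t+1} → ℤ[H]/A_H^{t+1}` induced by the inclusion. -/
noncomputable def jmap : QA H t →ₗ[ℤ] (MonoidAlgebra ℤ ↥H ⧸ At H (t + 1)) :=
  Submodule.mapQ (Submodule.comap (At H t).subtype (At H (t + 1))) (At H (t + 1))
    (At H t).subtype (le_refl _)

/-!
`ℤ[G]` is a free `ℤ[H]`-module on a set of coset representatives, and the coordinate maps are
`ℤ[H]`-linear. Since `J_H = A_H · ℤ[G]`, an element lies in `J_H^u` exactly when all its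
coordinates lie in `A_H^u`. For `α ∈ A_H^t` we have `ψ(α ḡ) = Σ_h hg ⊗ αh⁻¹`, and
`αh⁻¹ ≡ α` modulo `A_H^{t+1}` because `h⁻¹ - 1 ∈ A_H`; hence `ψ` sends `x ∈ J_H^t` to
`Σ_c ι(c) ⊗ x_c` modulo `A_H^{t+1}`, where `x_c` are the coordinates of `x`. The coset sums
`ι(c)` have disjoint supports, so this vanishes iff every `x_c` lies in `A_H^{t+1}`, i.e. iff
`x ∈ J_H^{t+1}`. Passing from `ℤ[G] ⊗ (A_H^t/A_H^{t+1})` to `ℤ[G] ⊗ (ℤ[H]/A_H^{t+1})` loses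
nothing because `ℤ[G]` is flat over `ℤ`.
-/

open MonoidAlgebra TensorProduct

lemma TensorProduct.sum_tmul_eq_zero_iff_of_biorthogonal {R M N ι : Type*} [CommSemiring R]
    [AddCommMonoid M] [Module R M] [AddCommMonoid N] [Module R N] [Fintype ι] [DecidableEq ι]
    {m : ι → M} (f : ι → M →ₗ[R] R) (hf : ∀ i j, f i (m j) = if i = j then 1 else 0)
    (n : ι → N) : ∑ i, m i ⊗ₜ[R] n i = 0 ↔ ∀ i, n i = 0 := by
  refine ⟨fun h i => ?_, fun h => by simp [h]⟩
  simpa [hf] using congr(TensorProduct.lid R N (LinearMap.rTensor N (f i) $h))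

section Augmentation

variable {K : Type*} [CommGroup K]

lemma of_sub_one_mem_augIdeal_s7 (k : K) : of ℤ K k - 1 ∈ augIdeal K := by
  simp [augIdeal, RingHom.mem_ker]

lemma mul_of_sub_self_mem_augIdeal_pow {t : ℕ} {α : MonoidAlgebra ℤ K}
    (hα : α ∈ augIdeal K ^ t) (k : K) : α * of ℤ K k - α ∈ augIdeal K ^ (t + 1) := by
  rw [← mul_sub_one, pow_succ]
  exact Ideal.mul_mem_mul hα (of_sub_one_mem_augIdeal_s7 k)

end Augmentation

lemma jmap_injective {G : Type*} [CommGroup G] (H : Subgroup G) [H.Normal] (t : ℕ) :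
    Function.Injective (jmap H t) := by
  rw [← LinearMap.ker_eq_bot, jmap, Submodule.ker_mapQ]
  exact Submodule.mkQ_map_self _

namespace PsiFactorization

section Coordinates

variable {G : Type*} [CommGroup G] (H : Subgroup G)

noncomputable abbrev emb : MonoidAlgebra ℤ H →+* MonoidAlgebra ℤ G :=
  mapDomainRingHom ℤ H.subtype

lemma coe_mul_injective (g : G) : Function.Injective fun h : H => (h : G) * g :=
  fun _ _ e => Subtype.ext (mul_right_cancel e)

/-- The coordinate of `x` at the coset `c`, for `ℤ[G]` viewed as a free `ℤ[H]`-module with basis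
the coset representatives `c.out` (see `sum_emb_cosetCoord_mul_out`). -/
noncomputable def cosetCoord (c : G ⧸ H) : MonoidAlgebra ℤ G →+ MonoidAlgebra ℤ H :=
  comapDomainAddMonoidHom _ (coe_mul_injective H c.out)

lemma coeff_cosetCoord (c : G ⧸ H) (x : MonoidAlgebra ℤ G) (h : H) :
    (cosetCoord H c x).coeff h = x.coeff (h * c.out) := by
  simp [cosetCoord]

lemma cosetCoord_single_mul_out (c : G ⧸ H) (k : H) (n : ℤ) :
    cosetCoord H c (single ((k : G) * c.out) n) = single k n :=
  comapDomain_single_map (R := ℤ) _ (coe_mul_injective H c.out) k n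

lemma mul_inv_out_mem (g : G) : g * (g : G ⧸ H).out⁻¹ ∈ H := by
  rw [← QuotientGroup.eq_one_iff]
  simp

lemma cosetCoord_mk_single (g : G) (n : ℤ) :
    cosetCoord H g (single g n) = single ⟨_, mul_inv_out_mem H g⟩ n := by
  have := cosetCoord_single_mul_out H g ⟨_, mul_inv_out_mem H g⟩ n
  rwa [Subgroup.coe_mk, inv_mul_cancel_right] at this

lemma cosetCoord_single_of_mk_ne {c : G ⧸ H} {g : G} (hg : (g : G ⧸ H) ≠ c) (n : ℤ) :
    cosetCoord H c (single g n) = 0 := by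
  refine comapDomain_single_of_not_mem_range ?_ (coe_mul_injective H c.out)
  rintro ⟨k, rfl⟩
  exact hg (by simp [QuotientGroup.mk_mul, (QuotientGroup.eq_one_iff (k : G)).2 k.2])

lemma cosetCoord_emb_mul (c : G ⧸ H) (β : MonoidAlgebra ℤ H) (x : MonoidAlgebra ℤ G) :
    cosetCoord H c (emb H β * x) = β * cosetCoord H c x := by
  induction β using MonoidAlgebra.induction_linear with
  | zero => simp
  | add β γ hβ hγ => rw [map_add, add_mul, map_add, hβ, hγ, add_mul]
  | single k n =>
    ext h
    simp [coeff_cosetCoord, mul_assoc]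

lemma sum_emb_cosetCoord_mul_out [Fintype (G ⧸ H)] (x : MonoidAlgebra ℤ G) :
    ∑ c : G ⧸ H, emb H (cosetCoord H c x) * of ℤ G c.out = x := by
  induction x using MonoidAlgebra.induction_linear with
  | zero => simp
  | add x y hx hy => simp only [map_add, add_mul, Finset.sum_add_distrib, hx, hy]
  | single g n =>
    rw [Finset.sum_eq_single (g : G ⧸ H)]
    · simp [cosetCoord_mk_single, single_mul_single]
    · intro c _ hc
      rw [cosetCoord_single_of_mk_ne H (Ne.symm hc), map_zero, zero_mul]
    · simp

lemma coeff_mapDomain_mk_eq_lift_cosetCoord [H.Normal] (x : MonoidAlgebra ℤ G) (c : G ⧸ H) :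
    (mapDomainRingHom ℤ (QuotientGroup.mk' H) x).coeff c = lift ℤ ℤ H 1 (cosetCoord H c x) := by
  induction x using MonoidAlgebra.induction_linear with
  | zero => simp
  | add x y hx hy => simp only [map_add, coeff_add, Finsupp.add_apply, hx, hy]
  | single g n =>
    by_cases hg : (g : G ⧸ H) = c
    · subst hg
      simp [mapDomainRingHom_apply, cosetCoord_mk_single, lift_single]
    · simp [mapDomainRingHom_apply, cosetCoord_single_of_mk_ne H hg, hg]

lemma mem_JIdeal_iff [H.Normal] (x : MonoidAlgebra ℤ G) :
    x ∈ JIdeal H ↔ ∀ c, cosetCoord H c x ∈ augIdeal H := by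
  simp only [JIdeal, augIdeal, RingHom.mem_ker, ← coeff_eq_zero, Finsupp.ext_iff,
    coeff_mapDomain_mk_eq_lift_cosetCoord]
  rfl

lemma mem_map_emb_iff [Fintype (G ⧸ H)] (I : Ideal (MonoidAlgebra ℤ H)) (x : MonoidAlgebra ℤ G) :
    x ∈ I.map (emb H) ↔ ∀ c, cosetCoord H c x ∈ I := by
  constructor
  · intro hx c
    obtain ⟨n, r, a, rfl⟩ := Submodule.mem_span_set'.1 hx
    rw [map_sum]
    refine sum_mem fun i _ => ?_
    obtain ⟨α, hα, hαa⟩ := (a i).2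
    rw [smul_eq_mul, ← hαa, mul_comm, cosetCoord_emb_mul]
    exact I.mul_mem_right _ hα
  · intro hx
    rw [← sum_emb_cosetCoord_mul_out H x]
    exact sum_mem fun c _ => Ideal.mul_mem_right _ _ (Ideal.mem_map_of_mem _ (hx c))

variable [H.Normal] [Fintype (G ⧸ H)]

lemma JIdeal_eq_map : JIdeal H = (augIdeal H).map (emb H) := by
  ext x
  rw [mem_JIdeal_iff, mem_map_emb_iff]

lemma mem_JIdeal_pow_iff (u : ℕ) (x : MonoidAlgebra ℤ G) :
    x ∈ JIdeal H ^ u ↔ ∀ c, cosetCoord H c x ∈ augIdeal H ^ u := by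
  rw [JIdeal_eq_map, ← Ideal.map_pow, mem_map_emb_iff]

lemma cosetCoord_mem_At {t : ℕ} {x : MonoidAlgebra ℤ G} (hx : x ∈ Jt H t) (c : G ⧸ H) :
    cosetCoord H c x ∈ At H t :=
  (mem_JIdeal_pow_iff H t x).1 hx c

end Coordinates

section CosetSum

variable {G : Type*} [CommGroup G] [Fintype G] (H : Subgroup G)

lemma coeff_cosetSum [DecidableEq (G ⧸ H)] (c : G ⧸ H) (x : G) :
    (cosetSum H c).coeff x = if (x : G ⧸ H) = c then 1 else 0 := by
  classical
  simp [cosetSum, coeff_sum, of_apply, Finsupp.single_apply]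

lemma cosetSum_mk [Fintype H] (g : G) : cosetSum H g = ∑ h : H, of ℤ G (h * g) := by
  classical
  have hcoset : Finset.univ.filter (fun x : G => (x : G ⧸ H) = g) =
      Finset.univ.map ⟨fun h : H => (h : G) * g, coe_mul_injective H g⟩ := by
    ext x
    simp only [Finset.mem_filter, Finset.mem_univ, true_and, Finset.mem_map,
      Function.Embedding.coeFn_mk, QuotientGroup.eq_iff_div_mem]
    exact ⟨fun hx => ⟨⟨_, hx⟩, div_mul_cancel x g⟩, by rintro ⟨h, rfl⟩; simp⟩
  rw [cosetSum, Finset.filter_congr_decidable, hcoset, Finset.sum_map]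
  rfl

end CosetSum

section Psi

variable {G : Type*} [CommGroup G] (H : Subgroup G) [Fintype H]

noncomputable def psiLinearMap :
    MonoidAlgebra ℤ G →ₗ[ℤ] MonoidAlgebra ℤ G ⊗[ℤ] MonoidAlgebra ℤ H :=
  ∑ h : H, (TensorProduct.mk ℤ _ _).flip (of ℤ H h⁻¹) ∘ₗ LinearMap.mulLeft ℤ (of ℤ G h)

lemma coe_psiLinearMap : ⇑(psiLinearMap H) = psiMap H := by
  ext ρ
  rw [psiLinearMap, LinearMap.sum_apply]
  rfl

lemma psiMap_emb_mul_of (α : MonoidAlgebra ℤ H) (g : G) :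
    psiMap H (emb H α * of ℤ G g) = ∑ h : H, of ℤ G (h * g) ⊗ₜ (α * of ℤ H h⁻¹) := by
  rw [← coe_psiLinearMap]
  induction α using MonoidAlgebra.induction_linear with
  | zero => simp
  | add α β hα hβ => simp only [map_add, add_mul, hα, hβ, tmul_add, Finset.sum_add_distrib]
  | single k n =>
    rw [coe_psiLinearMap, psiMap]
    refine Fintype.sum_equiv (Equiv.mulRight k) _ _ fun h => ?_
    simpa [single_mul_single, mul_assoc, smul_single] using
      smul_tmul n (single ((h * k : G) * g) (1 : ℤ)) (single h⁻¹ (1 : ℤ))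

variable [Fintype G]

lemma lTensor_mkQ_psiMap_emb_mul_of {t : ℕ} {α : MonoidAlgebra ℤ H} (hα : α ∈ At H t) (g : G) :
    (At H (t + 1)).mkQ.lTensor (MonoidAlgebra ℤ G) (psiMap H (emb H α * of ℤ G g)) =
      cosetSum H g ⊗ₜ (At H (t + 1)).mkQ α := by
  rw [psiMap_emb_mul_of, cosetSum_mk, sum_tmul, map_sum]
  refine Finset.sum_congr rfl fun h _ => ?_
  rw [LinearMap.lTensor_tmul, Submodule.mkQ_apply, Submodule.mkQ_apply]
  congr 1
  exact (Submodule.Quotient.eq _).2 <| mul_of_sub_self_mem_augIdeal_pow hα h⁻¹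

end Psi

section PsiOnJ

variable {G : Type*} [CommGroup G] [Fintype G] (H : Subgroup G) [H.Normal] [Fintype (G ⧸ H)]
  (t : ℕ)

/-- `x ↦ Σ_c ι(c) ⊗ [x_c]`: the isomorphism `J_H^t/J_H^{t+1} ≅ ℤ[Γ] ⊗ (A_H^t/A_H^{t+1})`
followed by `ι ⊗ 1`, before passing to the quotient by `J_H^{t+1}`. -/
noncomputable def psiOnJ : Jt H t →ₗ[ℤ] MonoidAlgebra ℤ G ⊗[ℤ] QA H t :=
  ∑ c : G ⧸ H, TensorProduct.mk ℤ _ _ (cosetSum H c) ∘ₗ Submodule.mkQ _ ∘ₗ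
    (((cosetCoord H c).toIntLinearMap ∘ₗ (Jt H t).subtype).codRestrict (At H t)
      fun x => cosetCoord_mem_At H x.2 c)

lemma psiOnJ_apply (x : Jt H t) :
    psiOnJ H t x = ∑ c : G ⧸ H,
      cosetSum H c ⊗ₜ Submodule.Quotient.mk ⟨cosetCoord H c x, cosetCoord_mem_At H x.2 c⟩ := by
  rw [psiOnJ, LinearMap.sum_apply]
  rfl

lemma lTensor_jmap_psiOnJ [Fintype H] (x : Jt H t) :
    (jmap H t).lTensor (MonoidAlgebra ℤ G) (psiOnJ H t x) =
      (At H (t + 1)).mkQ.lTensor (MonoidAlgebra ℤ G) (psiMap H x) := by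
  conv_rhs => rw [← sum_emb_cosetCoord_mul_out H (x : MonoidAlgebra ℤ G), ← coe_psiLinearMap,
    map_sum, map_sum]
  rw [psiOnJ_apply, map_sum]
  refine Finset.sum_congr rfl fun c _ => ?_
  rw [coe_psiLinearMap, lTensor_mkQ_psiMap_emb_mul_of H (cosetCoord_mem_At H x.2 c),
    QuotientGroup.out_eq']
  rfl

lemma ker_psiOnJ : LinearMap.ker (psiOnJ H t) = (Jt H (t + 1)).comap (Jt H t).subtype := by
  classical
  have hdual : ∀ c c' : G ⧸ H,
      (Finsupp.lapply c.out ∘ₗ (coeffLinearEquiv ℤ).toLinearMap) (cosetSum H c') =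
        if c = c' then 1 else 0 := by
    intro c c'
    simp [coeff_cosetSum]
  ext x
  rw [LinearMap.mem_ker, psiOnJ_apply, sum_tmul_eq_zero_iff_of_biorthogonal _ hdual]
  simp only [Submodule.Quotient.mk_eq_zero, Submodule.mem_comap, Submodule.subtype_apply]
  exact (mem_JIdeal_pow_iff H (t + 1) x).symm

end PsiOnJ

end PsiFactorization

open PsiFactorization

/-- With `ψ(ρ) = Σ_{h∈H} hρ ⊗ h⁻¹`, the induced map
`J_H^t/J_H^{t+1} → ℤ[G] ⊗_ℤ (A_H^t/A_H^{t+1})` equals the composition of the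
isomorphism `J_H^t/J_H^{t+1} ≅ ℤ[Γ] ⊗_ℤ (A_H^t/A_H^{t+1})` (sending the class of
`α·γ̄` to `γ ⊗ α`) with `ι ⊗ 1`, where `ι` sends a coset to the sum of its
elements; in particular the induced map is injective.  Concretely: there is a
map `ψ̄` on `J_H^t/J_H^{t+1}`, induced by `ψ`, sending the class of `α·γ̄` to
`ι(γ) ⊗ ᾱ`, and `ψ̄` is injective. -/
theorem psi_induced_factorization {G : Type*} [CommGroup G] [Fintype G]
    (H : Subgroup G) [H.Normal] [Fintype ↥H] (t : ℕ) :
    ∃ ψbar : QJ H t →ₗ[ℤ] TensorProduct ℤ (MonoidAlgebra ℤ G) (QA H t),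
      (∀ (ρ : MonoidAlgebra ℤ G) (hρ : ρ ∈ Jt H t),
        LinearMap.lTensor (MonoidAlgebra ℤ G) (jmap H t)
            (ψbar (Submodule.Quotient.mk ⟨ρ, hρ⟩)) =
          LinearMap.lTensor (MonoidAlgebra ℤ G) (At H (t + 1)).mkQ (psiMap H ρ)) ∧
      (∀ (g : G) (α : MonoidAlgebra ℤ ↥H) (hα : α ∈ At H t)
          (h2 : MonoidAlgebra.mapDomainRingHom ℤ H.subtype α * MonoidAlgebra.of ℤ G g ∈
            Jt H t),
        ψbar (Submodule.Quotient.mk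
            ⟨MonoidAlgebra.mapDomainRingHom ℤ H.subtype α * MonoidAlgebra.of ℤ G g, h2⟩) =
          cosetSum H (QuotientGroup.mk g) ⊗ₜ[ℤ] Submodule.Quotient.mk ⟨α, hα⟩) ∧
      Function.Injective ψbar := by
  classical
  have hker := ker_psiOnJ H t
  have hj : Function.Injective ((jmap H t).lTensor (MonoidAlgebra ℤ G)) :=
    Module.Flat.lTensor_preserves_injective_linearMap _ (jmap_injective H t)
  refine ⟨Submodule.liftQ _ (psiOnJ H t) hker.ge, fun ρ hρ => lTensor_jmap_psiOnJ H t ⟨ρ, hρ⟩,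
    fun g α hα h2 => hj ?_, LinearMap.ker_eq_bot.1 (Submodule.ker_liftQ_eq_bot _ _ _ hker.le)⟩
  rw [Submodule.liftQ_apply, lTensor_jmap_psiOnJ, lTensor_mkQ_psiMap_emb_mul_of H hα,
    LinearMap.lTensor_tmul]
  rfl
end
end

section
/- Let R be a commutative ring, M an R-module, ψ ∈ Hom_R(M, R), and for r ≥ 1 define ψ : ∧^r M → ∧^{r-1} M by ψ(m₁ ∧ ⋯ ∧ m_r) = Σ_{i=1}^r (-1)^{i+1} ψ(m_i) (m₁ ∧ ⋯ ∧ m_{i-1} ∧ m_{i+1} ∧ ⋯ ∧ m_r). Then for φ₁, …, φ_r ∈ Hom_R(M,R) and m₁, …, m_r ∈ M, the iterated contraction (φ_r ∘ φ_{r-1} ∘ ⋯ ∘ φ₁)(m₁ ∧ ⋯ ∧ m_r) equals det(φ_i(m_j)) ∈ R. -/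
/-!
Contracting `m₀ ∧ ⋯ ∧ mₙ` by `φ₀` gives `∑ⱼ (-1)ʲ φ₀(mⱼ) · (wedge of the other mᵢ)`. By induction
the remaining contractions send each of these wedges to the corresponding minor of `(φᵢ(mⱼ))`, so
the result is the Laplace expansion of the determinant along its first row.
-/

open CliffordAlgebra

namespace ExteriorAlgebra

variable {R M : Type*} [CommRing R] [AddCommGroup M] [Module R M]

theorem ι_mul_ιMulti_comp_succAbove {n : ℕ} (m : Fin (n + 2) → M) (j : Fin (n + 1)) :
    ι R (m 0) * ιMulti R n (Matrix.vecTail m ∘ j.succAbove) =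
      ιMulti R (n + 1) (m ∘ j.succ.succAbove) := by
  rw [ιMulti_succ_apply]
  congr 2
  ext i
  simp [Matrix.vecTail]

theorem contractLeft_ιMulti_succ (d : Module.Dual R M) {n : ℕ} (m : Fin (n + 1) → M) :
    contractLeft (Q := 0) d (ιMulti R (n + 1) m) =
      ∑ j : Fin (n + 1), ((-1 : R) ^ (j : ℕ) * d (m j)) • ιMulti R n (m ∘ j.succAbove) := by
  induction n with
  | zero => simp [ιMulti_succ_apply, ← Algebra.algebraMap_eq_smul_one, ι, contractLeft_ι]
  | succ n ih =>
    rw [ιMulti_succ_apply, ι, contractLeft_ι_mul, ih, Fin.sum_univ_succ (n := n + 1),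
      Finset.mul_sum, sub_eq_add_neg, ← Finset.sum_neg_distrib]
    simp only [Fin.val_zero, pow_zero, one_mul, Fin.succAbove_zero, Fin.val_succ, pow_succ]
    congr 1
    refine Finset.sum_congr rfl fun j _ => ?_
    rw [mul_smul_comm, ← ι, ι_mul_ιMulti_comp_succAbove, ← neg_smul]
    congr 1
    simp only [Matrix.vecTail, Function.comp_apply]
    ring

end ExteriorAlgebra

theorem List.foldl_linearMap_apply {R D E : Type*} [Semiring R] [AddCommMonoid E] [Module R E]
    (f : D → Module.End R E) (l : List D) (x : E) :
    l.foldl (fun y d => f d y) x = (l.map f).reverse.prod x := by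
  induction l generalizing x with
  | nil => rfl
  | cons d l ih => simp [ih]

/-- For a commutative ring `R`, an `R`-module `M`, functionals
`φ₁, …, φ_r ∈ Hom_R(M,R)` and elements `m₁, …, m_r ∈ M`, the iterated
contraction `(φ_r ∘ ⋯ ∘ φ₁)(m₁ ∧ ⋯ ∧ m_r)` (each contraction being the
alternating-sum interior product `∧^k M → ∧^{k-1} M`) equals the determinant
`det(φ_i(m_j))`, viewed as a scalar in the exterior algebra. -/
theorem iterated_contraction_eq_det (R M : Type*) [CommRing R] [AddCommGroup M]
    [Module R M] (r : ℕ) (φ : Fin r → Module.Dual R M) (m : Fin r → M) :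
    (List.ofFn φ).foldl
        (fun x d => CliffordAlgebra.contractLeft (Q := (0 : QuadraticForm R M)) d x)
        (ExteriorAlgebra.ιMulti R r m) =
      algebraMap R (ExteriorAlgebra R M) (Matrix.det (Matrix.of fun i j => φ i (m j))) := by
  induction r with
  | zero => simp
  | succ n ih =>
    rw [List.ofFn_succ, List.foldl_cons, ExteriorAlgebra.contractLeft_ιMulti_succ,
      List.foldl_linearMap_apply, map_sum, Matrix.det_succ_row_zero, map_sum]
    refine Finset.sum_congr rfl fun j _ => ?_
    rw [map_smul, ← List.foldl_linearMap_apply, ih (fun i => φ i.succ) (m ∘ j.succAbove),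
      Algebra.smul_def, ← map_mul]
    rfl
end

section
/- Let R be a commutative ring, O ⊆ R, F ⊇ O its fraction field, and M a finitely generated R-module. If m ∈ Λ^r(M) (the dual lattice of ∧^r M^* in (∧^r M) ⊗ F) and Ψ ∈ ∧^s M^* with s ≤ r, then the contraction Ψ(m) lies in Λ^{r-s}(M). -/
noncomputable section

open TensorProduct

variable (O : Type*) [CommRing O] [IsDomain O]
variable (Γ : Type*) [CommGroup Γ] [Fintype Γ]
variable (M : Type*) [AddCommGroup M] [Module O M]
  [Module (MonoidAlgebra O Γ) M] [IsScalarTower O (MonoidAlgebra O Γ) M]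

/-- The exterior algebra of `M` over the group ring `R = O[Γ]`, scalar-extended to the
fraction field `F` of `O` (tensored over `O`). -/
abbrev EAF :=
  TensorProduct O (FractionRing O) (ExteriorAlgebra (MonoidAlgebra O Γ) M)

/-- The natural map from the exterior algebra to its scalar extension to `F`. -/
def inclF (x : ExteriorAlgebra (MonoidAlgebra O Γ) M) : EAF O Γ M :=
  (1 : FractionRing O) ⊗ₜ[O] x

/-- Contraction (interior product) by a functional `d ∈ Hom_R(M,R)`, extended
`F`-linearly to the scalar extension of the exterior algebra. -/
def contrF (d : Module.Dual (MonoidAlgebra O Γ) M) : EAF O Γ M →ₗ[O] EAF O Γ M :=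
  LinearMap.lTensor (FractionRing O)
    ((CliffordAlgebra.contractLeft (Q := (0 : QuadraticForm (MonoidAlgebra O Γ) M)) d).restrictScalars O)

/-- Iterated contraction by a family of functionals (the first functional acts first);
on the image of `∧^n M` this is the determinant pairing with `∧^n M^*`. -/
def iterContr {n : ℕ} (φ : Fin n → Module.Dual (MonoidAlgebra O Γ) M) (x : EAF O Γ M) :
    EAF O Γ M :=
  (List.ofFn φ).foldl (fun y d => contrF O Γ M d y) x

/-- The dual lattice `Λ^r(M) ⊂ (∧^r M) ⊗_O F`: elements of the `F`-span of the image of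
`∧^r M` on which every `Ψ ∈ ∧^r M^*` (acting by the determinant/contraction pairing)
takes values in `R`. -/
def Lambda (r : ℕ) : Set (EAF O Γ M) :=
  {m | m ∈ Submodule.span (FractionRing O)
        (Set.range fun x : ↥(⋀[MonoidAlgebra O Γ]^r M) =>
          inclF O Γ M (x : ExteriorAlgebra (MonoidAlgebra O Γ) M)) ∧
    ∀ φ : Fin r → Module.Dual (MonoidAlgebra O Γ) M,
      iterContr O Γ M φ m ∈
        Set.range fun a : MonoidAlgebra O Γ =>
          inclF O Γ M (algebraMap (MonoidAlgebra O Γ) (ExteriorAlgebra (MonoidAlgebra O Γ) M) a)}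

/-!
Contraction by a functional maps `⋀^k M` into `⋀^(k-1) M`, so contracting by `ψ₁, …, ψ_s`
maps the `F`-span of `⋀^r M` into that of `⋀^(r-s) M`. Contracting further by
`φ₁, …, φ_(r-s)` is contracting by the concatenated family of length `r`, on which
`m ∈ Λ^r(M)` takes values in `R` by assumption.
-/

open CliffordAlgebra

namespace ExteriorAlgebra

variable {R N : Type*} [CommRing R] [AddCommGroup N] [Module R N] (d : Module.Dual R N)

theorem contractLeft_eq_zero_of_mem_exteriorPower_zero {x : ExteriorAlgebra R N}
    (hx : x ∈ ⋀[R]^0 N) : contractLeft (Q := (0 : QuadraticForm R N)) d x = 0 := by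
  rw [exteriorPower, pow_zero, Submodule.mem_one] at hx
  obtain ⟨r, rfl⟩ := hx
  exact contractLeft_algebraMap (Q := 0) d r

theorem contractLeft_mem_exteriorPower_pred {k : ℕ} {x : ExteriorAlgebra R N}
    (hx : x ∈ ⋀[R]^k N) : contractLeft (Q := (0 : QuadraticForm R N)) d x ∈ ⋀[R]^(k - 1) N := by
  induction hx using Submodule.pow_induction_on_left' with
  | algebraMap r =>
    rw [contractLeft_algebraMap]
    exact Submodule.zero_mem _
  | add x y i _ _ ihx ihy =>
    rw [map_add]
    exact Submodule.add_mem _ ihx ihy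
  | mem_mul m hm i x hx ih =>
    obtain ⟨a, rfl⟩ := hm
    rw [contractLeft_ι_mul]
    cases i with
    | zero =>
      rw [contractLeft_eq_zero_of_mem_exteriorPower_zero d hx, mul_zero, sub_zero]
      exact Submodule.smul_mem _ _ hx
    | succ j =>
      refine Submodule.sub_mem _ (Submodule.smul_mem _ _ hx) ?_
      change _ ∈ LinearMap.range (ι R) ^ (j + 1)
      rw [pow_succ']
      exact Submodule.mul_mem_mul (LinearMap.mem_range_self _ a) ih

end ExteriorAlgebra

/-- The `F`-span of `⋀^k M` in `(⋀ M) ⊗_O F`, as in the first condition of `Lambda`. -/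
def exteriorPowerF (k : ℕ) : Submodule (FractionRing O) (EAF O Γ M) :=
  Submodule.span (FractionRing O)
    (Set.range fun x : ↥(⋀[MonoidAlgebra O Γ]^k M) =>
      inclF O Γ M (x : ExteriorAlgebra (MonoidAlgebra O Γ) M))

section

omit [IsDomain O] [Fintype Γ]

variable {O Γ M}

theorem contrF_mem_exteriorPowerF (d : Module.Dual (MonoidAlgebra O Γ) M) {k : ℕ}
    {y : EAF O Γ M} (hy : y ∈ exteriorPowerF O Γ M k) :
    contrF O Γ M d y ∈ exteriorPowerF O Γ M (k - 1) := by
  let f := ((contractLeft (Q := (0 : QuadraticForm (MonoidAlgebra O Γ) M)) d).restrictScalars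
    O).baseChange (FractionRing O)
  have hf : ⇑f = contrF O Γ M d := LinearMap.baseChange_eq_ltensor _
  suffices exteriorPowerF O Γ M k ≤ (exteriorPowerF O Γ M (k - 1)).comap f by
    have hfy := this hy
    rwa [Submodule.mem_comap, hf] at hfy
  refine Submodule.span_le.mpr ?_
  rintro _ ⟨x, rfl⟩
  exact Submodule.subset_span
    ⟨⟨_, ExteriorAlgebra.contractLeft_mem_exteriorPower_pred d x.2⟩, rfl⟩

theorem foldl_contrF_mem_exteriorPowerF (l : List (Module.Dual (MonoidAlgebra O Γ) M))
    {k : ℕ} {y : EAF O Γ M} (hy : y ∈ exteriorPowerF O Γ M k) :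
    l.foldl (fun y d => contrF O Γ M d y) y ∈ exteriorPowerF O Γ M (k - l.length) := by
  induction l generalizing k y with
  | nil => simpa using hy
  | cons d l ih =>
    rw [List.foldl_cons, List.length_cons, Nat.add_comm, ← Nat.sub_sub]
    exact ih (contrF_mem_exteriorPowerF d hy)

theorem iterContr_mem_exteriorPowerF {s k : ℕ} (ψ : Fin s → Module.Dual (MonoidAlgebra O Γ) M)
    {y : EAF O Γ M} (hy : y ∈ exteriorPowerF O Γ M k) :
    iterContr O Γ M ψ y ∈ exteriorPowerF O Γ M (k - s) := by
  have h := foldl_contrF_mem_exteriorPowerF (List.ofFn ψ) hy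
  rwa [List.length_ofFn] at h

theorem iterContr_iterContr {s t n : ℕ} (h : s + t = n)
    (ψ : Fin s → Module.Dual (MonoidAlgebra O Γ) M)
    (φ : Fin t → Module.Dual (MonoidAlgebra O Γ) M) (y : EAF O Γ M) :
    iterContr O Γ M φ (iterContr O Γ M ψ y) =
      iterContr O Γ M (Fin.append ψ φ ∘ Fin.cast h.symm) y := by
  simp only [iterContr]
  rw [← List.foldl_append, ← List.ofFn_fin_append, List.ofFn_congr h]
  rfl

end

theorem contraction_preserves_dual_lattice
    (r s : ℕ) (hs : s ≤ r) (m : EAF O Γ M) (hm : m ∈ Lambda O Γ M r)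
    (ψ : Fin s → Module.Dual (MonoidAlgebra O Γ) M) :
    iterContr O Γ M ψ m ∈ Lambda O Γ M (r - s) := by
  obtain ⟨hspan, hintegral⟩ := hm
  refine ⟨iterContr_mem_exteriorPowerF ψ hspan, fun φ => ?_⟩
  rw [iterContr_iterContr (Nat.add_sub_cancel' hs)]
  exact hintegral _
end
end

section
/- Let O be an integral domain, R = O[Γ] for a finite abelian group Γ, M a finitely generated R-module that is projective as an O-module, and B an O-module. Then the natural map M^* ⊗_O B → Hom_R(M, R ⊗_O B) is an isomorphism, where M^* = Hom_R(M, R). -/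
/-!
For a finite group `Γ`, the module `O[Γ] ⊗_O V` is coinduced from `V`: an `O[Γ]`-linear map
`f : M → O[Γ] ⊗_O V` is recovered from `ε ∘ f`, where `ε` takes the coefficient at `1`, as
`m ↦ ∑ γ ⊗ ε(f(γ⁻¹ m))`, and this formula turns every `O`-linear `g : M → V` into an
`O[Γ]`-linear map. Hence
`Hom_{O[Γ]}(M, O[Γ] ⊗_O V) ≃ Hom_O(M, V)`. For `V = O` this identifies `M^*` with the `O`-dual
of `M`, and the natural map becomes the classical isomorphism `Hom_O(M, O) ⊗_O B ≃ Hom_O(M, B)`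
for `M` finitely generated projective over `O` (it is finite over `O` because `O[Γ]` is).
-/

open TensorProduct MonoidAlgebra

namespace LinearEquiv

variable {R S M N N' : Type*} [Semiring R] [Semiring S] [SMul S R]
  [AddCommMonoid M] [AddCommMonoid N] [AddCommMonoid N'] [Module R M] [Module R N] [Module R N']
  [Module S N] [Module S N'] [SMulCommClass R S N] [SMulCommClass R S N']
  [IsScalarTower S R N] [IsScalarTower S R N']

variable (S M) in
def congrRightOfTower (e : N ≃ₗ[R] N') : (M →ₗ[R] N) ≃ₗ[S] (M →ₗ[R] N') where
  __ := (LinearEquiv.refl R M).arrowCongrAddEquiv e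
  map_smul' c f := by ext; exact e.toLinearMap.map_smul_of_tower c _

@[simp]
lemma congrRightOfTower_apply (e : N ≃ₗ[R] N') (f : M →ₗ[R] N) (m : M) :
    congrRightOfTower S M e f m = e (f m) := rfl

end LinearEquiv

namespace MonoidAlgebra

variable {O : Type*} [CommRing O] {Γ : Type*} [Group Γ]
  {M : Type*} [AddCommGroup M] [Module O M] [Module O[Γ] M] [IsScalarTower O O[Γ] M]
  {V : Type*} [AddCommGroup V] [Module O V]

variable (O Γ V) in
noncomputable def tensorCoeffOne : O[Γ] ⊗[O] V →ₗ[O] V :=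
  TensorProduct.lid O V ∘ₗ ((basis Γ O).coord 1).rTensor V

@[simp]
lemma tensorCoeffOne_tmul (r : O[Γ]) (v : V) :
    tensorCoeffOne O Γ V (r ⊗ₜ v) = r.coeff 1 • v := rfl

lemma tensorCoeffOne_single_tmul [DecidableEq Γ] (γ : Γ) (v : V) :
    tensorCoeffOne O Γ V (single γ (1 : O) ⊗ₜ v) = if γ = 1 then v else 0 := by
  simp [coeff_single, Finsupp.single_apply]

lemma coeff_one_single_inv_mul (γ : Γ) (r : O[Γ]) :
    (single γ⁻¹ (1 : O) * r).coeff 1 = r.coeff γ := by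
  simp [coeff_single_mul_apply]

variable [Fintype Γ]

lemma sum_coeff_smul_single_one (r : O[Γ]) : ∑ γ : Γ, r.coeff γ • single γ (1 : O) = r :=
  (basis Γ O).sum_repr r

lemma sum_single_tmul_tensorCoeffOne (t : O[Γ] ⊗[O] V) :
    ∑ γ : Γ, single γ (1 : O) ⊗ₜ tensorCoeffOne O Γ V (single γ⁻¹ (1 : O) • t) = t := by
  induction t with
  | zero => simp
  | tmul r v =>
    simp only [smul_tmul', smul_eq_mul, tensorCoeffOne_tmul, coeff_one_single_inv_mul,
      ← smul_tmul, ← sum_tmul, sum_coeff_smul_single_one]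
  | add s t hs ht => simp only [smul_add, map_add, tmul_add, Finset.sum_add_distrib, hs, ht]

variable (Γ V) in
noncomputable def coindFun (g : M →ₗ[O] V) : M →ₗ[O] O[Γ] ⊗[O] V :=
  ∑ γ : Γ, TensorProduct.mk O O[Γ] V (single γ 1) ∘ₗ g ∘ₗ GroupSMul.linearMap O M γ⁻¹

lemma coindFun_apply (g : M →ₗ[O] V) (m : M) :
    coindFun Γ V g m = ∑ γ : Γ, single γ (1 : O) ⊗ₜ g (single γ⁻¹ (1 : O) • m) := by
  simp [coindFun]

lemma coindFun_single_smul (g : M →ₗ[O] V) (a : Γ) (m : M) :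
    coindFun Γ V g (single a (1 : O) • m) = single a (1 : O) • coindFun Γ V g m := by
  simp only [coindFun_apply, smul_smul, single_mul_single, one_mul, Finset.smul_sum, smul_tmul',
    smul_eq_mul]
  exact Fintype.sum_equiv (Equiv.mulLeft a⁻¹) _ _ fun γ => by simp

noncomputable def coind (g : M →ₗ[O] V) : M →ₗ[O[Γ]] O[Γ] ⊗[O] V :=
  equivariantOfLinearOfComm (coindFun Γ V g) (coindFun_single_smul g)

variable (M V) in
noncomputable def homTensorEquiv : (M →ₗ[O[Γ]] O[Γ] ⊗[O] V) ≃ₗ[O] (M →ₗ[O] V) where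
  toFun f := tensorCoeffOne O Γ V ∘ₗ f.restrictScalars O
  map_add' f f' := by ext; simp
  map_smul' c f := by ext; simp
  invFun := coind
  left_inv f := by
    ext m
    simp only [coind, equivariantOfLinearOfComm_apply, coindFun_apply, LinearMap.comp_apply,
      LinearMap.restrictScalars_apply, map_smul]
    exact sum_single_tmul_tensorCoeffOne (f m)
  right_inv g := by
    classical
    ext m
    simp only [coind, LinearMap.comp_apply, LinearMap.restrictScalars_apply,
      equivariantOfLinearOfComm_apply, coindFun_apply, map_sum, tensorCoeffOne_single_tmul,
      Finset.sum_ite_eq', Finset.mem_univ, if_true, inv_one, ← one_def, one_smul]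

@[simp]
lemma homTensorEquiv_apply (f : M →ₗ[O[Γ]] O[Γ] ⊗[O] V) (m : M) :
    homTensorEquiv M V f m = tensorCoeffOne O Γ V (f m) := rfl

variable (M) in
noncomputable def dualEquiv : (M →ₗ[O[Γ]] O[Γ]) ≃ₗ[O] (M →ₗ[O] O) :=
  LinearEquiv.congrRightOfTower O M (AlgebraTensorModule.rid O O[Γ] O[Γ]).symm ≪≫ₗ
    homTensorEquiv M O

@[simp]
lemma dualEquiv_apply (φ : M →ₗ[O[Γ]] O[Γ]) (m : M) : dualEquiv M φ m = (φ m).coeff 1 := by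
  simp [dualEquiv]

lemma homTensorEquiv_comp_mk_flip (φ : M →ₗ[O[Γ]] O[Γ]) (b : V) :
    homTensorEquiv M V ((AlgebraTensorModule.mk O O[Γ] O[Γ] V).flip b ∘ₗ φ) =
      dualTensorHom O M V (dualEquiv M φ ⊗ₜ b) := by
  ext m
  simp

end MonoidAlgebra

theorem dual_tensor_hom_iso_general (O : Type*) [CommRing O]
    (Γ : Type*) [CommGroup Γ] [Finite Γ]
    (M : Type*) [AddCommGroup M] [Module O M] [Module (MonoidAlgebra O Γ) M]
    [IsScalarTower O (MonoidAlgebra O Γ) M] [Module.Finite (MonoidAlgebra O Γ) M]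
    [Module.Projective O M]
    (B : Type*) [AddCommGroup B] [Module O B] :
    ∃ e : (TensorProduct O (M →ₗ[MonoidAlgebra O Γ] MonoidAlgebra O Γ) B) ≃ₗ[O]
        (M →ₗ[MonoidAlgebra O Γ] TensorProduct O (MonoidAlgebra O Γ) B),
      ∀ (φ : M →ₗ[MonoidAlgebra O Γ] MonoidAlgebra O Γ) (b : B) (m : M),
        e (φ ⊗ₜ[O] b) m = φ m ⊗ₜ[O] b := by
  have : Fintype Γ := Fintype.ofFinite Γ
  have : Module.Finite O M := .trans (MonoidAlgebra O Γ) M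
  refine ⟨TensorProduct.congr (dualEquiv M) (.refl O B) ≪≫ₗ dualTensorHomEquiv O M B ≪≫ₗ
    (homTensorEquiv M B).symm, fun φ b m => ?_⟩
  have h := (LinearEquiv.symm_apply_eq _).2 (homTensorEquiv_comp_mk_flip φ b).symm
  exact congr($h m)

/-- Let `O` be an integral domain, `R = O[Γ]` for a finite abelian
group `Γ`, `M` a finitely generated `R`-module that is projective as an `O`-module,
and `B` an `O`-module.  Then the natural map `M^* ⊗_O B → Hom_R(M, R ⊗_O B)`
(sending `φ ⊗ b` to `m ↦ φ(m) ⊗ b`), where `M^* = Hom_R(M,R)`, is an isomorphism. -/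
theorem dual_tensor_hom_iso (O : Type*) [CommRing O] [IsDomain O]
    (Γ : Type*) [CommGroup Γ] [Finite Γ]
    (M : Type*) [AddCommGroup M] [Module O M] [Module (MonoidAlgebra O Γ) M]
    [IsScalarTower O (MonoidAlgebra O Γ) M] [Module.Finite (MonoidAlgebra O Γ) M]
    [Module.Projective O M]
    (B : Type*) [AddCommGroup B] [Module O B] :
    ∃ e : (TensorProduct O (M →ₗ[MonoidAlgebra O Γ] MonoidAlgebra O Γ) B) ≃ₗ[O]
        (M →ₗ[MonoidAlgebra O Γ] TensorProduct O (MonoidAlgebra O Γ) B),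
      ∀ (φ : M →ₗ[MonoidAlgebra O Γ] MonoidAlgebra O Γ) (b : B) (m : M),
        e (φ ⊗ₜ[O] b) m = φ m ⊗ₜ[O] b :=
  dual_tensor_hom_iso_general O Γ M B
end
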